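/- arXiv:1905.06361 — 9 statements merged into one kernel-verified Lean document; each statement's English description precedes it below -/
import Mathlib

section
/- Let U be a finite nonempty set, d a metric on U, and α > 0. The Exponential Mechanism satisfies α-condensed local differential privacy: for all v1, v2, y ∈ U, Pr[Φ_EM(v1) = y] ≤ exp(α·d(v1,v2)) · Pr[Φ_EM(v2) = y]. -/
/-- The probability that the Exponential Mechanism with distance `d` and
privacy parameter `α` outputs `y` on input `v`. -/
noncomputable def EMprob {U : Type*} [Fintype U] (d : U → U → ℝ) (α : ℝ) (v y : U) : ℝ :=
  Real.exp (-α * d v y / 2) / ∑ z, Real.exp (-α * d v z / 2)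

open Real Finset

/-- The shift `c` is paid once in the numerator and once in the normalising sum. -/
theorem exp_div_sum_exp_le_of_forall_le_add {ι : Type*} [Fintype ι] (s t : ι → ℝ) (c : ℝ)
    (hst : ∀ j, s j ≤ t j + c) (hts : ∀ j, t j ≤ s j + c) (i : ι) :
    exp (s i) / ∑ j, exp (s j) ≤ exp (2 * c) * (exp (t i) / ∑ j, exp (t j)) := by
  have : Nonempty ι := ⟨i⟩
  have hS : 0 < ∑ j, exp (s j) := sum_pos (fun j _ => exp_pos (s j)) univ_nonempty
  have hT : 0 < ∑ j, exp (t j) := sum_pos (fun j _ => exp_pos (t j)) univ_nonempty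
  have hnum : exp (s i) ≤ exp c * exp (t i) := by
    rw [← exp_add]
    exact exp_le_exp.2 (by linarith [hst i])
  have hden : ∑ j, exp (t j) ≤ exp c * ∑ j, exp (s j) := by
    rw [mul_sum]
    gcongr with j
    rw [← exp_add]
    exact exp_le_exp.2 (by linarith [hts j])
  rw [div_le_iff₀ hS]
  calc exp (s i) ≤ exp c * exp (t i) := hnum
    _ = exp (2 * c) * (exp (t i) / ∑ j, exp (t j)) * ((∑ j, exp (t j)) / exp c) := by
      rw [two_mul, exp_add]
      field_simp
    _ ≤ exp (2 * c) * (exp (t i) / ∑ j, exp (t j)) * ∑ j, exp (s j) := by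
      gcongr
      rwa [div_le_iff₀' (exp_pos c)]

theorem em_satisfies_cldp_general {U : Type*} [Fintype U]
    (d : U → U → ℝ) (α : ℝ) (hα : 0 < α)
    (hd_symm : ∀ x y, d x y = d y x)
    (hd_tri : ∀ x y z, d x z ≤ d x y + d y z)
    (v1 v2 y : U) :
    EMprob d α v1 y ≤ Real.exp (α * d v1 v2) * EMprob d α v2 y := by
  have score_le : ∀ a b z, -α * d b z / 2 ≤ -α * d a z / 2 + α * d a b / 2 := fun a b z => by
    linarith [mul_le_mul_of_nonneg_left (hd_tri a b z) hα.le]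
  have h := exp_div_sum_exp_le_of_forall_le_add (fun z => -α * d v1 z / 2)
    (fun z => -α * d v2 z / 2) (α * d v1 v2 / 2) (fun z => hd_symm v1 v2 ▸ score_le v2 v1 z)
    (score_le v1 v2) y
  rwa [mul_div_cancel₀ _ two_ne_zero] at h

/-- The Exponential Mechanism satisfies α-CLDP. -/
theorem em_satisfies_cldp {U : Type*} [Fintype U] [Nonempty U]
    (d : U → U → ℝ) (α : ℝ) (hα : 0 < α)
    (hd_nonneg : ∀ x y, 0 ≤ d x y)
    (hd_symm : ∀ x y, d x y = d y x)
    (hd_tri : ∀ x y z, d x z ≤ d x y + d y z)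
    (hd_eq : ∀ x y, d x y = 0 ↔ x = y)
    (v1 v2 y : U) :
    EMprob d α v1 y ≤ Real.exp (α * d v1 v2) * EMprob d α v2 y :=
  em_satisfies_cldp_general d α hα hd_symm hd_tri v1 v2 y
end

section
/- Let U be a finite nonempty set, d a metric on U, and α > 0. For all v1, v2 ∈ U, the ratio of normalizing sums satisfies (Σ_{z∈U} exp(−α·d(v2,z)/2)) / (Σ_{z∈U} exp(−α·d(v1,z)/2)) ≤ exp(α·d(v1,v2)/2). -/
/-- Ratio of Exponential Mechanism normalizing sums is bounded by `exp (α·d(v1,v2)/2)`. -/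
theorem em_normalizer_ratio {U : Type*} [Fintype U] [Nonempty U]
    (d : U → U → ℝ) (α : ℝ) (hα : 0 < α)
    (hd_nonneg : ∀ x y, 0 ≤ d x y)
    (hd_symm : ∀ x y, d x y = d y x)
    (hd_tri : ∀ x y z, d x z ≤ d x y + d y z)
    (hd_eq : ∀ x y, d x y = 0 ↔ x = y)
    (v1 v2 : U) :
    (∑ z, Real.exp (-α * d v2 z / 2)) / (∑ z, Real.exp (-α * d v1 z / 2))
      ≤ Real.exp (α * d v1 v2 / 2) := by
  have hS : 0 < ∑ z, Real.exp (-α * d v1 z / 2) :=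
    Finset.sum_pos (fun z _ => Real.exp_pos _) Finset.univ_nonempty
  rw [div_le_iff₀ hS, Finset.mul_sum]
  refine Finset.sum_le_sum fun z _ => ?_
  rw [← Real.exp_add]
  apply Real.exp_le_exp.mpr
  have := hd_tri v1 v2 z
  nlinarith [hd_nonneg v1 v2]
end

section
/- Let U be a finite set with |U| = N ≥ 2, α > 0, c > 0, and let d be the scaled discrete metric d(x,y) = c for x ≠ y and d(x,x) = 0. For any true-count function t : U → ℝ, define obs(y) = Σ_{x∈U} t(x)·Pr[Φ_EM(x) = y], where Φ_EM is the Exponential Mechanism with metric d and parameter α. Then the expected observed counts preserve relative frequency rankings: for all v_i, v_j ∈ U, t(v_i) > t(v_j) if and only if obs(v_i) > obs(v_j). -/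
/-!
Under the discrete metric every row of the mechanism's weight matrix is `1` on the diagonal and
`e = exp (-α c / 2) < 1` elsewhere, with the same row sum `Z`. Hence
`obs y = ((1 - e) * t y + e * ∑ x, t x) / Z`, an increasing affine function of `t y`.
-/

open Finset

section DiagonalKernel

variable {U R : Type*} [Fintype U] [DecidableEq U] [CommRing R]

theorem sum_mul_ite_eq_sub_mul_add (t : U → R) (a b : R) (y : U) :
    ∑ x, t x * (if x = y then a else b) = (a - b) * t y + b * ∑ x, t x := by
  have split : ∀ x, t x * (if x = y then a else b) =
      b * t x + if x = y then (a - b) * t x else 0 := by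
    intro x
    split_ifs <;> ring
  simp only [split, sum_add_distrib, sum_ite_eq', mem_univ, if_true, ← mul_sum]
  ring

theorem sum_ite_eq_sub_add_card_mul (a b : R) (x : U) :
    ∑ z, (if x = z then a else b) = a - b + Fintype.card U * b := by
  simpa [eq_comm, mul_comm] using sum_mul_ite_eq_sub_mul_add (fun _ => (1 : R)) a b x

end DiagonalKernel

theorem em_preserves_ranking_general {U : Type*} [Fintype U] [DecidableEq U]
    (α c : ℝ) (hα : 0 < α) (hc : 0 < c)
    (d : U → U → ℝ) (hd : ∀ x y, d x y = if x = y then 0 else c)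
    (t : U → ℝ) (obs : U → ℝ)
    (hobs : ∀ y, obs y =
      ∑ x, t x * (Real.exp (-α * d x y / 2) / ∑ z, Real.exp (-α * d x z / 2)))
    (vi vj : U) :
    t vi > t vj ↔ obs vi > obs vj := by
  set e := Real.exp (-α * c / 2)
  have he : 0 < 1 - e := sub_pos.mpr (Real.exp_lt_one_iff.mpr (by nlinarith))
  have hweight : ∀ x y, Real.exp (-α * d x y / 2) = if x = y then 1 else e := by
    intro x y
    rw [hd]
    split_ifs
    · simp
    · rfl
  have hrow_sum : 0 < 1 - e + Fintype.card U * e := by positivity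
  have hobs_affine :
      ∀ y, obs y = ((1 - e) * t y + e * ∑ x, t x) / (1 - e + Fintype.card U * e) := by
    intro y
    simp only [hobs, hweight, sum_ite_eq_sub_add_card_mul, mul_div_assoc', ← sum_div,
      sum_mul_ite_eq_sub_mul_add]
  rw [hobs_affine, hobs_affine, gt_iff_lt, gt_iff_lt, div_lt_div_iff_of_pos_right hrow_sum,
    add_lt_add_iff_right, mul_lt_mul_iff_of_pos_left he]

/-- Under the scaled discrete metric, the expected observed counts of the
Exponential Mechanism preserve relative frequency rankings. -/
theorem em_preserves_ranking {U : Type*} [Fintype U] [DecidableEq U]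
    (hcard : 2 ≤ Fintype.card U)
    (α c : ℝ) (hα : 0 < α) (hc : 0 < c)
    (d : U → U → ℝ) (hd : ∀ x y, d x y = if x = y then 0 else c)
    (t : U → ℝ) (obs : U → ℝ)
    (hobs : ∀ y, obs y =
      ∑ x, t x * (Real.exp (-α * d x y / 2) / ∑ z, Real.exp (-α * d x z / 2)))
    (vi vj : U) :
    t vi > t vj ↔ obs vi > obs vj :=
  em_preserves_ranking_general α c hα hc d hd t obs hobs vi vj
end

section
/- Let α > 0 and halt, gen ∈ (0,1) satisfy the four parameter constraints: gen ≤ e^α·(1−halt), (1−halt) ≤ e^α·gen, halt ≤ e^α·(1−gen), and (1−gen) ≤ e^α·halt. Then the Sequence-CLDP length distribution satisfies α-length-indistinguishability: for all natural numbers n, m, ℓ, P(n,ℓ) ≤ exp(α·|n − m|)·P(m,ℓ). -/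
/-- If the four parameter constraints hold, the Sequence-CLDP length
distribution satisfies α-length-indistinguishability. -/
theorem seq_cldp_length_indistinguishability (α halt gen : ℝ) (hα : 0 < α)
    (hhalt : halt ∈ Set.Ioo (0 : ℝ) 1) (hgen : gen ∈ Set.Ioo (0 : ℝ) 1)
    (h1 : gen ≤ Real.exp α * (1 - halt))
    (h2 : 1 - halt ≤ Real.exp α * gen)
    (h3 : halt ≤ Real.exp α * (1 - gen))
    (h4 : 1 - gen ≤ Real.exp α * halt)
    (P : ℕ → ℕ → ℝ)
    (hP : ∀ n ℓ, P n ℓ = if ℓ < n then halt * (1 - halt) ^ ℓ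
      else (1 - halt) ^ n * (1 - gen) * gen ^ (ℓ - n))
    (n m ℓ : ℕ) :
    P n ℓ ≤ Real.exp (α * |(n : ℝ) - (m : ℝ)|) * P m ℓ := by
  obtain ⟨hh0, hh1⟩ := hhalt
  obtain ⟨hg0, hg1⟩ := hgen
  have hh1' : (0:ℝ) < 1 - halt := by linarith
  have hg1' : (0:ℝ) < 1 - gen := by linarith
  have hE0 : (0:ℝ) < Real.exp α := Real.exp_pos α
  have hPnn : ∀ a b : ℕ, 0 ≤ P a b := by
    intro a b
    rw [hP]
    split <;> positivity
  suffices h : ∃ d : ℕ, (d : ℝ) ≤ |(n : ℝ) - (m : ℝ)| ∧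
      P n ℓ ≤ Real.exp α ^ d * P m ℓ by
    obtain ⟨d, hd1, hd2⟩ := h
    refine hd2.trans (mul_le_mul_of_nonneg_right ?_ (hPnn m ℓ))
    rw [← Real.exp_nat_mul]
    apply Real.exp_le_exp.2
    have : (0:ℝ) ≤ (d:ℝ) := Nat.cast_nonneg d
    nlinarith
  have keyh : ∀ k : ℕ, (1 - halt) ^ k ≤ Real.exp α ^ k * gen ^ k := by
    intro k
    rw [← mul_pow]
    exact pow_le_pow_left₀ hh1'.le h2 k
  have keyg : ∀ k : ℕ, gen ^ k ≤ Real.exp α ^ k * (1 - halt) ^ k := by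
    intro k
    rw [← mul_pow]
    exact pow_le_pow_left₀ hg0.le h1 k
  by_cases hn : ℓ < n <;> by_cases hm : ℓ < m
  · -- both short
    refine ⟨0, by simpa using abs_nonneg _, ?_⟩
    rw [hP, hP, if_pos hn, if_pos hm, pow_zero, one_mul]
  · -- ℓ < n, m ≤ ℓ
    push_neg at hm
    have hmn : m ≤ n := le_of_lt (lt_of_le_of_lt hm hn)
    obtain ⟨k, rfl⟩ : ∃ k, ℓ = m + k := ⟨ℓ - m, by omega⟩
    refine ⟨k + 1, ?_, ?_⟩
    · rw [abs_of_nonneg (sub_nonneg.2 (by exact_mod_cast hmn))]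
      have hnl : ((m + k : ℕ) : ℝ) + 1 ≤ (n : ℝ) := by exact_mod_cast hn
      push_cast at hnl ⊢
      linarith
    · rw [hP, hP, if_pos hn, if_neg (not_lt.2 hm), Nat.add_sub_cancel_left, pow_add]
      calc halt * ((1 - halt) ^ m * (1 - halt) ^ k)
          ≤ (Real.exp α * (1 - gen)) * ((1 - halt) ^ m * (Real.exp α ^ k * gen ^ k)) := by
            gcongr
            exact keyh k
        _ = Real.exp α ^ (k + 1) * ((1 - halt) ^ m * (1 - gen) * gen ^ k) := by ring
  · -- n ≤ ℓ, ℓ < m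
    push_neg at hn
    have hnm : n ≤ m := le_of_lt (lt_of_le_of_lt hn hm)
    obtain ⟨k, rfl⟩ : ∃ k, ℓ = n + k := ⟨ℓ - n, by omega⟩
    refine ⟨k + 1, ?_, ?_⟩
    · rw [abs_of_nonpos (sub_nonpos.2 (by exact_mod_cast hnm)), neg_sub]
      have hml : ((n + k : ℕ) : ℝ) + 1 ≤ (m : ℝ) := by exact_mod_cast hm
      push_cast at hml ⊢
      linarith
    · rw [hP, hP, if_neg (not_lt.2 hn), if_pos hm, Nat.add_sub_cancel_left, pow_add]
      calc (1 - halt) ^ n * (1 - gen) * gen ^ k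
          ≤ (1 - halt) ^ n * (Real.exp α * halt) * (Real.exp α ^ k * (1 - halt) ^ k) := by
            gcongr
            exact keyg k
        _ = Real.exp α ^ k * Real.exp α ^ 1 * (halt * (1 - halt) ^ (n + k)) := by
            rw [pow_add]; ring
  · -- both long
    push_neg at hn hm
    rcases le_total m n with hmn | hnm
    · obtain ⟨j, rfl⟩ : ∃ j, n = m + j := ⟨n - m, by omega⟩
      refine ⟨j, ?_, ?_⟩
      · rw [abs_of_nonneg (sub_nonneg.2 (by exact_mod_cast hmn))]
        push_cast
        linarith
      · rw [hP, hP, if_neg (not_lt.2 hn), if_neg (not_lt.2 hm), pow_add,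
          show ℓ - m = (ℓ - (m + j)) + j by omega, pow_add]
        calc (1 - halt) ^ m * (1 - halt) ^ j * (1 - gen) * gen ^ (ℓ - (m + j))
            ≤ (1 - halt) ^ m * (Real.exp α ^ j * gen ^ j) * (1 - gen) * gen ^ (ℓ - (m + j)) := by
              gcongr
              exact keyh j
          _ = Real.exp α ^ j * ((1 - halt) ^ m * (1 - gen) * (gen ^ (ℓ - (m + j)) * gen ^ j)) := by
              ring
    · obtain ⟨j, rfl⟩ : ∃ j, m = n + j := ⟨m - n, by omega⟩
      refine ⟨j, ?_, ?_⟩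
      · rw [abs_of_nonpos (sub_nonpos.2 (by exact_mod_cast hnm)), neg_sub]
        push_cast
        linarith
      · rw [hP, hP, if_neg (not_lt.2 hn), if_neg (not_lt.2 hm), pow_add,
          show ℓ - n = (ℓ - (n + j)) + j by omega, pow_add]
        calc (1 - halt) ^ n * (1 - gen) * (gen ^ (ℓ - (n + j)) * gen ^ j)
            ≤ (1 - halt) ^ n * (1 - gen) *
              (gen ^ (ℓ - (n + j)) * (Real.exp α ^ j * (1 - halt) ^ j)) := by
              gcongr
              exact keyg j
          _ = Real.exp α ^ j * ((1 - halt) ^ n * (1 - halt) ^ j * (1 - gen) * gen ^ (ℓ - (n + j))) := by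
              ring
end

section
/- Let α > 0 and set halt = gen = 1/(e^α + 1). Then the Sequence-CLDP length distribution satisfies α-length-indistinguishability: for all natural numbers n, m, ℓ, P(n,ℓ) ≤ exp(α·|n − m|)·P(m,ℓ). -/
/-!
With `E = exp α` and `q = halt = gen = 1 / (E + 1)` we have `1 - q = E * q`, so every value of the
length distribution collapses to `P(n, ℓ) = E ^ c(n, ℓ) * q ^ (ℓ + 1)`, where `c(n, ℓ)` is `ℓ` if
`ℓ < n` and `n + 1` otherwise. The factor `q ^ (ℓ + 1)` does not depend on `n`, and `c(·, ℓ)` is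
`1`-Lipschitz, so changing `n` to `m` multiplies `P` by at most `E ^ |n - m|`.
-/

open Real

noncomputable def seqCLDPLength (halt gen : ℝ) (n ℓ : ℕ) : ℝ :=
  if ℓ < n then halt * (1 - halt) ^ ℓ else (1 - halt) ^ n * (1 - gen) * gen ^ (ℓ - n)

def seqCLDPExponent (n ℓ : ℕ) : ℕ :=
  if ℓ < n then ℓ else n + 1

lemma seqCLDPExponent_le_add_dist (n m ℓ : ℕ) :
    seqCLDPExponent n ℓ ≤ Nat.dist n m + seqCLDPExponent m ℓ := by
  unfold seqCLDPExponent Nat.dist; split_ifs <;> omega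

lemma Nat.cast_dist_eq_abs_sub (n m : ℕ) : (Nat.dist n m : ℝ) = |(n : ℝ) - m| := by
  rcases le_total n m with h | h
  · rw [Nat.dist_eq_sub_of_le h, Nat.cast_sub h, abs_sub_comm, abs_of_nonneg (by simpa using h)]
  · rw [Nat.dist_eq_sub_of_le_right h, Nat.cast_sub h, abs_of_nonneg (by simpa using h)]

lemma seqCLDPLength_self_eq {q E : ℝ} (hq : 1 - q = E * q) (n ℓ : ℕ) :
    seqCLDPLength q q n ℓ = E ^ seqCLDPExponent n ℓ * q ^ (ℓ + 1) := by
  unfold seqCLDPLength seqCLDPExponent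
  split_ifs with h
  · rw [hq]; ring
  · obtain ⟨k, rfl⟩ := Nat.exists_eq_add_of_le (not_lt.mp h)
    rw [hq, Nat.add_sub_cancel_left]; ring

lemma one_sub_one_div_add_one {x : ℝ} (hx : x + 1 ≠ 0) : 1 - 1 / (x + 1) = x * (1 / (x + 1)) := by
  field_simp; ring

lemma seqCLDPLength_self_le_pow_dist_mul {q E : ℝ} (hq : 1 - q = E * q) (hq₀ : 0 ≤ q)
    (hE : 1 ≤ E) (n m ℓ : ℕ) :
    seqCLDPLength q q n ℓ ≤ E ^ Nat.dist n m * seqCLDPLength q q m ℓ := by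
  rw [seqCLDPLength_self_eq hq, seqCLDPLength_self_eq hq, ← mul_assoc, ← pow_add]
  gcongr
  exact seqCLDPExponent_le_add_dist n m ℓ

/-- With the symmetric parameter choice `halt = gen = 1/(e^α + 1)`, the
Sequence-CLDP length distribution satisfies α-length-indistinguishability. -/
theorem seq_cldp_length_indistinguishability_symmetric (α halt gen : ℝ) (hα : 0 < α)
    (hhalt : halt = 1 / (Real.exp α + 1)) (hgen : gen = 1 / (Real.exp α + 1))
    (P : ℕ → ℕ → ℝ)
    (hP : ∀ n ℓ, P n ℓ = if ℓ < n then halt * (1 - halt) ^ ℓ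
      else (1 - halt) ^ n * (1 - gen) * gen ^ (ℓ - n))
    (n m ℓ : ℕ) :
    P n ℓ ≤ Real.exp (α * |(n : ℝ) - (m : ℝ)|) * P m ℓ := by
  have hP' : P = seqCLDPLength halt gen := funext₂ hP
  obtain rfl : halt = gen := hhalt.trans hgen.symm
  subst hP'
  have hhalt_pos : 0 ≤ halt := by rw [hhalt]; positivity
  have hhalt_compl : 1 - halt = exp α * halt := hhalt ▸ one_sub_one_div_add_one (by positivity)
  calc seqCLDPLength halt halt n ℓ
      ≤ exp α ^ Nat.dist n m * seqCLDPLength halt halt m ℓ :=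
        seqCLDPLength_self_le_pow_dist_mul hhalt_compl hhalt_pos (one_le_exp hα.le) n m ℓ
    _ = exp (α * |(n : ℝ) - m|) * seqCLDPLength halt halt m ℓ := by
        rw [← exp_nat_mul, Nat.cast_dist_eq_abs_sub, mul_comm _ α]
end

section
/- Let α > 0 and let halt, gen be real numbers with 0 < halt < 1/(e^α + 1) and 1 − e^α·halt ≤ gen ≤ 1 − halt/e^α. Then the Sequence-CLDP length distribution satisfies α-length-indistinguishability: for all natural numbers n, m, ℓ, P(n,ℓ) ≤ exp(α·|n − m|)·P(m,ℓ). -/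
/-!
Write `c = exp α`. It suffices to compare adjacent true lengths, `P(n,ℓ) ≤ c·P(n+1,ℓ)` and
`P(n+1,ℓ) ≤ c·P(n,ℓ)`, since chaining `|n - m|` such steps gives the factor
`exp (α |n - m|)`. For `ℓ < n` both values agree; at `ℓ = n` the ratio of the two values
is `(1 - gen)/halt`, and for `ℓ > n` it is `gen/(1 - halt)`. The bounds on `gen` say exactly
that `(1 - gen)/halt ∈ [1/c, c]`, and together with `halt (c + 1) < 1` they also give
`gen/(1 - halt) ∈ [1/c, c]`.
-/

open Real

section Chain

variable {f : ℕ → ℝ} {c : ℝ}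

theorem le_pow_mul_add_of_le_mul_succ (hc : 0 ≤ c) (hstep : ∀ n, f n ≤ c * f (n + 1))
    (n k : ℕ) : f n ≤ c ^ k * f (n + k) := by
  induction k with
  | zero => simp
  | succ k ih =>
    calc f n ≤ c ^ k * f (n + k) := ih
      _ ≤ c ^ k * (c * f (n + k + 1)) := by gcongr; exact hstep _
      _ = c ^ (k + 1) * f (n + (k + 1)) := by rw [pow_succ, ← add_assoc]; ring

theorem add_le_pow_mul_of_succ_le_mul (hc : 0 ≤ c) (hstep : ∀ n, f (n + 1) ≤ c * f n)
    (n k : ℕ) : f (n + k) ≤ c ^ k * f n := by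
  induction k with
  | zero => simp
  | succ k ih =>
    calc f (n + (k + 1)) ≤ c * f (n + k) := hstep _
      _ ≤ c * (c ^ k * f n) := by gcongr
      _ = c ^ (k + 1) * f n := by ring

theorem le_exp_mul_abs_sub_mul {a : ℝ} (hup : ∀ n, f n ≤ exp a * f (n + 1))
    (hdown : ∀ n, f (n + 1) ≤ exp a * f n) (n m : ℕ) :
    f n ≤ exp (a * |(n : ℝ) - m|) * f m := by
  rcases le_total n m with h | h
  · obtain ⟨k, rfl⟩ := Nat.exists_eq_add_of_le h
    have hdist : |(n : ℝ) - ↑(n + k)| = k := by push_cast; simp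
    rw [hdist, mul_comm a, exp_nat_mul]
    exact le_pow_mul_add_of_le_mul_succ (exp_pos a).le hup n k
  · obtain ⟨k, rfl⟩ := Nat.exists_eq_add_of_le h
    have hdist : |(↑(m + k) : ℝ) - m| = k := by push_cast; simp
    rw [hdist, mul_comm a, exp_nat_mul]
    exact add_le_pow_mul_of_succ_le_mul (exp_pos a).le hdown m k

end Chain

namespace SeqCLDP

def lengthDist (halt gen : ℝ) (n ℓ : ℕ) : ℝ :=
  if ℓ < n then halt * (1 - halt) ^ ℓ else (1 - halt) ^ n * (1 - gen) * gen ^ (ℓ - n)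

variable {halt gen c : ℝ} {n ℓ : ℕ}

theorem lengthDist_of_lt (h : ℓ < n) : lengthDist halt gen n ℓ = halt * (1 - halt) ^ ℓ :=
  if_pos h

theorem lengthDist_of_le (h : n ≤ ℓ) :
    lengthDist halt gen n ℓ = (1 - halt) ^ n * (1 - gen) * gen ^ (ℓ - n) :=
  if_neg h.not_gt

theorem lengthDist_add_succ (n k : ℕ) :
    lengthDist halt gen n (n + k + 1) = (1 - halt) ^ n * (1 - gen) * gen ^ k * gen := by
  rw [lengthDist_of_le (by omega), show n + k + 1 - n = k + 1 by omega, pow_succ]; ring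

theorem lengthDist_succ_add_succ (n k : ℕ) :
    lengthDist halt gen (n + 1) (n + k + 1) =
      (1 - halt) ^ n * (1 - gen) * gen ^ k * (1 - halt) := by
  rw [lengthDist_of_le (by omega), show n + k + 1 - (n + 1) = k by omega, pow_succ]; ring

theorem lengthDist_le_mul_succ (hhalt0 : 0 ≤ halt) (hhalt1 : halt ≤ 1) (hgen0 : 0 ≤ gen)
    (hgen1 : gen ≤ 1) (hc : 1 ≤ c) (hstop : 1 - gen ≤ c * halt)
    (hcont : gen ≤ c * (1 - halt)) :
    lengthDist halt gen n ℓ ≤ c * lengthDist halt gen (n + 1) ℓ := by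
  have h1halt : 0 ≤ 1 - halt := by linarith
  rcases lt_trichotomy ℓ n with h | rfl | h
  · rw [lengthDist_of_lt h, lengthDist_of_lt (h.trans n.lt_succ_self)]
    exact le_mul_of_one_le_left (by positivity) hc
  · rw [lengthDist_of_le le_rfl, lengthDist_of_lt ℓ.lt_succ_self, Nat.sub_self, pow_zero,
      mul_one]
    linarith [mul_le_mul_of_nonneg_left hstop (pow_nonneg h1halt ℓ)]
  · obtain ⟨k, rfl⟩ : ∃ k, ℓ = n + k + 1 := ⟨ℓ - n - 1, by omega⟩
    rw [lengthDist_add_succ, lengthDist_succ_add_succ]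
    have : 0 ≤ (1 - halt) ^ n * (1 - gen) * gen ^ k := by have := sub_nonneg.2 hgen1; positivity
    linarith [mul_le_mul_of_nonneg_left hcont this]

theorem lengthDist_succ_le_mul (hhalt0 : 0 ≤ halt) (hhalt1 : halt ≤ 1) (hgen0 : 0 ≤ gen)
    (hgen1 : gen ≤ 1) (hc : 1 ≤ c) (hstop : halt ≤ c * (1 - gen))
    (hcont : 1 - halt ≤ c * gen) :
    lengthDist halt gen (n + 1) ℓ ≤ c * lengthDist halt gen n ℓ := by
  have h1halt : 0 ≤ 1 - halt := by linarith
  rcases lt_trichotomy ℓ n with h | rfl | h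
  · rw [lengthDist_of_lt h, lengthDist_of_lt (h.trans n.lt_succ_self)]
    exact le_mul_of_one_le_left (by positivity) hc
  · rw [lengthDist_of_le le_rfl, lengthDist_of_lt ℓ.lt_succ_self, Nat.sub_self, pow_zero,
      mul_one]
    linarith [mul_le_mul_of_nonneg_left hstop (pow_nonneg h1halt ℓ)]
  · obtain ⟨k, rfl⟩ : ∃ k, ℓ = n + k + 1 := ⟨ℓ - n - 1, by omega⟩
    rw [lengthDist_add_succ, lengthDist_succ_add_succ]
    have : 0 ≤ (1 - halt) ^ n * (1 - gen) * gen ^ k := by have := sub_nonneg.2 hgen1; positivity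
    linarith [mul_le_mul_of_nonneg_left hcont this]

theorem lengthDist_le_mul_succ_and_succ_le_mul (hc : 1 ≤ c) (hhalt0 : 0 < halt)
    (hhalt1 : halt < 1 / (c + 1)) (hgen0 : 1 - c * halt ≤ gen) (hgen1 : gen ≤ 1 - halt / c)
    (n ℓ : ℕ) :
    lengthDist halt gen n ℓ ≤ c * lengthDist halt gen (n + 1) ℓ ∧
      lengthDist halt gen (n + 1) ℓ ≤ c * lengthDist halt gen n ℓ := by
  have hc0 : 0 < c := by linarith
  have hhalt_mul : halt * (c + 1) < 1 := (lt_div_iff₀ (by linarith)).1 hhalt1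
  have hhalt_div : halt / c ≤ 1 - gen := by linarith
  have hgen_pos : 0 < gen := by linarith
  have hgen_le : gen ≤ 1 := by linarith [div_pos hhalt0 hc0]
  refine ⟨lengthDist_le_mul_succ hhalt0.le (by nlinarith) hgen_pos.le hgen_le hc (by linarith) ?_,
    lengthDist_succ_le_mul hhalt0.le (by nlinarith) hgen_pos.le hgen_le hc ?_ ?_⟩
  -- `c² (1 - halt) - (c - halt) = (c - 1) (c - halt (c + 1))`
  · nlinarith [mul_le_mul_of_nonneg_right hgen1 hc0.le, div_mul_cancel₀ halt hc0.ne',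
      mul_nonneg (sub_nonneg.2 hc) (by nlinarith : 0 ≤ c - halt * (c + 1))]
  · rwa [div_le_iff₀ hc0, mul_comm] at hhalt_div
  -- `c (1 - c halt) - (1 - halt) = (c - 1) (1 - halt (c + 1))`
  · nlinarith [mul_le_mul_of_nonneg_left hgen0 hc0.le,
      mul_nonneg (sub_nonneg.2 hc) (sub_nonneg.2 hhalt_mul.le)]

end SeqCLDP

/-- With the asymmetric parameter choice, the Sequence-CLDP length
distribution satisfies α-length-indistinguishability. -/
theorem seq_cldp_length_indistinguishability_asymmetric (α halt gen : ℝ) (hα : 0 < α)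
    (hhalt0 : 0 < halt) (hhalt1 : halt < 1 / (Real.exp α + 1))
    (hgen0 : 1 - Real.exp α * halt ≤ gen) (hgen1 : gen ≤ 1 - halt / Real.exp α)
    (P : ℕ → ℕ → ℝ)
    (hP : ∀ n ℓ, P n ℓ = if ℓ < n then halt * (1 - halt) ^ ℓ
      else (1 - halt) ^ n * (1 - gen) * gen ^ (ℓ - n))
    (n m ℓ : ℕ) :
    P n ℓ ≤ Real.exp (α * |(n : ℝ) - (m : ℝ)|) * P m ℓ := by
  obtain rfl : P = SeqCLDP.lengthDist halt gen := funext fun n => funext (hP n)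
  have hstep := SeqCLDP.lengthDist_le_mul_succ_and_succ_le_mul (one_le_exp hα.le) hhalt0 hhalt1
    hgen0 hgen1
  exact le_exp_mul_abs_sub_mul (fun k => (hstep k ℓ).1) (fun k => (hstep k ℓ).2) n m
end

section
/- Let α > 0 and halt, gen ∈ (0,1) satisfy (1−halt) ≤ e^α·gen and halt ≤ e^α·(1−gen). Then for all natural numbers m, ℓ, n with m ≤ ℓ < n: halt·(1−halt)^ℓ ≤ exp(α·(n − m))·(1−halt)^m·(1−gen)·gen^{ℓ−m}. -/
/-! Split `(1 - halt) ^ ℓ = (1 - halt) ^ m * (1 - halt) ^ (ℓ - m)`. The two hypotheses bound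
`halt` by `e^α (1 - gen)` and each of the last `ℓ - m` factors `1 - halt` by `e^α gen`, at the
cost of `ℓ - m + 1 ≤ n - m` factors `e^α ≥ 1`. -/

theorem mul_pow_add_le_mul_mul_pow {R : Type*} [CommSemiring R] [PartialOrder R] [IsOrderedRing R]
    {p q r s : R} (hpr : p ≤ r) (hr : 0 ≤ r) (hq : 0 ≤ q) (hqs : q ≤ s) (m k : ℕ) :
    p * q ^ (m + k) ≤ r * (q ^ m * s ^ k) := by
  rw [pow_add]
  exact mul_le_mul hpr
    (mul_le_mul_of_nonneg_left (pow_le_pow_left₀ hq hqs k) (pow_nonneg hq m)) (by positivity) hr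

theorem Real.exp_mul_natCast_sub {m n : ℕ} (h : m ≤ n) (x : ℝ) :
    Real.exp (x * ((n : ℝ) - m)) = Real.exp x ^ (n - m) := by
  rw [← Nat.cast_sub h, mul_comm, Real.exp_nat_mul]

/-- Case 3 of the length-indistinguishability proof: halting probability versus
generation probability when `m ≤ ℓ < n`. -/
theorem seq_cldp_case3 (α halt gen : ℝ) (hα : 0 < α)
    (hhalt : halt ∈ Set.Ioo (0 : ℝ) 1) (hgen : gen ∈ Set.Ioo (0 : ℝ) 1)
    (h2 : 1 - halt ≤ Real.exp α * gen)
    (h3 : halt ≤ Real.exp α * (1 - gen))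
    (m ℓ n : ℕ) (hmℓ : m ≤ ℓ) (hℓn : ℓ < n) :
    halt * (1 - halt) ^ ℓ
      ≤ Real.exp (α * ((n : ℝ) - (m : ℝ))) * ((1 - halt) ^ m * (1 - gen) * gen ^ (ℓ - m)) := by
  have hhalt' : 0 ≤ 1 - halt := sub_nonneg.2 hhalt.2.le
  have hgen' : 0 ≤ 1 - gen := sub_nonneg.2 hgen.2.le
  have hgen0 : 0 ≤ gen := hgen.1.le
  calc halt * (1 - halt) ^ ℓ = halt * (1 - halt) ^ (m + (ℓ - m)) := by
        rw [Nat.add_sub_cancel' hmℓ]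
    _ ≤ Real.exp α * (1 - gen) * ((1 - halt) ^ m * (Real.exp α * gen) ^ (ℓ - m)) :=
        mul_pow_add_le_mul_mul_pow h3 (by positivity) hhalt' h2 m (ℓ - m)
    _ = Real.exp α ^ (ℓ - m + 1) * ((1 - halt) ^ m * (1 - gen) * gen ^ (ℓ - m)) := by ring
    _ ≤ Real.exp α ^ (n - m) * ((1 - halt) ^ m * (1 - gen) * gen ^ (ℓ - m)) := by
        gcongr
        · exact Real.one_le_exp hα.le
        · omega
    _ = Real.exp (α * ((n : ℝ) - (m : ℝ))) * ((1 - halt) ^ m * (1 - gen) * gen ^ (ℓ - m)) := by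
        rw [Real.exp_mul_natCast_sub (by omega)]
end

section
/- Let α > 0 and halt, gen ∈ (0,1) satisfy (1−gen) ≤ e^α·halt and gen ≤ e^α·(1−halt). Then for all natural numbers n, ℓ, m with n ≤ ℓ < m: (1−halt)^n·(1−gen)·gen^{ℓ−n} ≤ exp(α·(m − n))·halt·(1−halt)^ℓ. -/
theorem one_sub_pow_mul_one_sub_mul_pow_le {c halt gen : ℝ} (hc : 0 ≤ c) (hhalt₀ : 0 ≤ halt)
    (hhalt₁ : halt ≤ 1) (hgen : 0 ≤ gen) (h4 : 1 - gen ≤ c * halt) (h1 : gen ≤ c * (1 - halt))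
    (n k : ℕ) :
    (1 - halt) ^ n * (1 - gen) * gen ^ k ≤ c ^ (k + 1) * (halt * (1 - halt) ^ (n + k)) := by
  have : 0 ≤ 1 - halt := sub_nonneg.2 hhalt₁
  calc (1 - halt) ^ n * (1 - gen) * gen ^ k
      ≤ (1 - halt) ^ n * (c * halt) * (c * (1 - halt)) ^ k := by gcongr
    _ = c ^ (k + 1) * (halt * (1 - halt) ^ (n + k)) := by rw [mul_pow, pow_add, pow_succ]; ring

theorem Real.exp_pow_le_exp_mul {α x : ℝ} (hα : 0 ≤ α) {j : ℕ} (hj : (j : ℝ) ≤ x) :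
    Real.exp α ^ j ≤ Real.exp (α * x) := by
  rw [← Real.exp_nat_mul, Real.exp_le_exp, mul_comm]
  exact mul_le_mul_of_nonneg_left hj hα

/-- Case 4 of the length-indistinguishability proof: generation probability versus
halting probability when `n ≤ ℓ < m`. -/
theorem seq_cldp_case4 (α halt gen : ℝ) (hα : 0 < α)
    (hhalt : halt ∈ Set.Ioo (0 : ℝ) 1) (hgen : gen ∈ Set.Ioo (0 : ℝ) 1)
    (h4 : 1 - gen ≤ Real.exp α * halt)
    (h1 : gen ≤ Real.exp α * (1 - halt))
    (n ℓ m : ℕ) (hnℓ : n ≤ ℓ) (hℓm : ℓ < m) :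
    (1 - halt) ^ n * (1 - gen) * gen ^ (ℓ - n)
      ≤ Real.exp (α * ((m : ℝ) - (n : ℝ))) * (halt * (1 - halt) ^ ℓ) := by
  obtain ⟨k, rfl⟩ := Nat.exists_eq_add_of_le hnℓ
  have hk : ((k + 1 : ℕ) : ℝ) ≤ m - n := by
    have : ((n + k + 1 : ℕ) : ℝ) ≤ m := by exact_mod_cast hℓm
    push_cast at this ⊢
    linarith
  have hhalt₀ : 0 ≤ halt := hhalt.1.le
  have hhalt₁ : 0 ≤ 1 - halt := sub_nonneg.2 hhalt.2.le
  rw [Nat.add_sub_cancel_left]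
  calc (1 - halt) ^ n * (1 - gen) * gen ^ k
      ≤ Real.exp α ^ (k + 1) * (halt * (1 - halt) ^ (n + k)) :=
        one_sub_pow_mul_one_sub_mul_pow_le (Real.exp_nonneg α) hhalt₀ hhalt.2.le hgen.1.le h4 h1
          n k
    _ ≤ Real.exp (α * ((m : ℝ) - n)) * (halt * (1 - halt) ^ (n + k)) := by
        gcongr
        exact Real.exp_pow_le_exp_mul hα.le hk
end

section
/- Let U be a finite nonempty set, d a metric on U, and α > 0. Let n, m be natural numbers with m ≤ n, let X, Y : Fin n → U be two sequences of length n, and let S : Fin m → U be any sequence of length m. Then the coordinatewise products of Exponential Mechanism probabilities satisfy ∏_{i < m} Pr[Φ_EM(X[i]) = S[i]] ≤ exp(α · Σ_{i < n} d(X[i], Y[i])) · ∏_{i < m} Pr[Φ_EM(Y[i]) = S[i]]. -/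
/-! Moving the input of the exponential mechanism from `x` to `y` changes the numerator
`exp (-α d(x, s) / 2)` and, termwise, the normalising sum by a factor of at most
`exp (α d(x, y) / 2)` each, by the triangle inequality. Multiplying these coordinatewise bounds
over the prefix gives the factor `exp (α ∑ i < m, d(X i, Y i))`, and the prefix sum is at most
the full sum since distances are nonnegative. -/

open Finset

theorem Fintype.sum_comp_le_sum {ι κ : Type*} [Fintype ι] [Fintype κ]
    (e : ι ↪ κ) {f : κ → ℝ} (hf : ∀ j, 0 ≤ f j) :
    ∑ i, f (e i) ≤ ∑ j, f j := by
  rw [← sum_map univ e f]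
  exact sum_le_univ_sum_of_nonneg hf

theorem prod_le_exp_sum_mul_prod {ι : Type*} (s : Finset ι) {f g c : ι → ℝ}
    (hf : ∀ i ∈ s, 0 ≤ f i) (hfg : ∀ i ∈ s, f i ≤ Real.exp (c i) * g i) :
    ∏ i ∈ s, f i ≤ Real.exp (∑ i ∈ s, c i) * ∏ i ∈ s, g i := by
  rw [Real.exp_sum, ← prod_mul_distrib]
  exact prod_le_prod hf hfg

theorem Real.exp_neg_mul_half_le {α a b c : ℝ} (hα : 0 ≤ α) (h : c ≤ b + a) :
    Real.exp (-α * a / 2) ≤ Real.exp (α * b / 2) * Real.exp (-α * c / 2) := by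
  rw [← Real.exp_add, Real.exp_le_exp]
  nlinarith

section EMprob

variable {U : Type*} [Fintype U] (d : U → U → ℝ)

theorem EMprob_nonneg (α : ℝ) (v y : U) : 0 ≤ EMprob d α v y := by
  unfold EMprob
  positivity

theorem EMprob_le_exp_mul_EMprob {α : ℝ} (hα : 0 ≤ α) (hd_symm : ∀ x y, d x y = d y x)
    (hd_tri : ∀ x y z, d x z ≤ d x y + d y z) (x y s : U) :
    EMprob d α x s ≤ Real.exp (α * d x y) * EMprob d α y s := by
  have : Nonempty U := ⟨x⟩
  set k := Real.exp (α * d x y / 2)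
  have hZx : 0 < ∑ z, Real.exp (-α * d x z / 2) :=
    sum_pos (fun _ _ ↦ Real.exp_pos _) univ_nonempty
  have hZy : 0 < ∑ z, Real.exp (-α * d y z / 2) :=
    sum_pos (fun _ _ ↦ Real.exp_pos _) univ_nonempty
  have hnum : Real.exp (-α * d x s / 2) ≤ k * Real.exp (-α * d y s / 2) :=
    Real.exp_neg_mul_half_le hα (hd_symm x y ▸ hd_tri y x s)
  have hden : ∑ z, Real.exp (-α * d y z / 2) ≤ k * ∑ z, Real.exp (-α * d x z / 2) := by
    rw [mul_sum]
    exact sum_le_sum fun z _ ↦ Real.exp_neg_mul_half_le hα (hd_tri x y z)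
  have hk : Real.exp (α * d x y) = k * k := by rw [← Real.exp_add]; ring_nf
  unfold EMprob
  rw [hk, mul_div_assoc', div_le_div_iff₀ hZx hZy]
  calc Real.exp (-α * d x s / 2) * ∑ z, Real.exp (-α * d y z / 2)
      ≤ (k * Real.exp (-α * d y s / 2)) * (k * ∑ z, Real.exp (-α * d x z / 2)) :=
        mul_le_mul hnum hden hZy.le (by positivity)
    _ = k * k * Real.exp (-α * d y s / 2) * ∑ z, Real.exp (-α * d x z / 2) := by ring

end EMprob

theorem em_product_bound_general {U : Type*} [Fintype U]
    (d : U → U → ℝ) (α : ℝ) (hα : 0 < α)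
    (hd_nonneg : ∀ x y, 0 ≤ d x y)
    (hd_symm : ∀ x y, d x y = d y x)
    (hd_tri : ∀ x y z, d x z ≤ d x y + d y z)
    (n m : ℕ) (hmn : m ≤ n)
    (X Y : Fin n → U) (S : Fin m → U) :
    (∏ i : Fin m, EMprob d α (X (Fin.castLE hmn i)) (S i))
      ≤ Real.exp (α * ∑ i : Fin n, d (X i) (Y i)) *
        ∏ i : Fin m, EMprob d α (Y (Fin.castLE hmn i)) (S i) := by
  have hprefix : ∑ i : Fin m, d (X (Fin.castLE hmn i)) (Y (Fin.castLE hmn i))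
      ≤ ∑ i : Fin n, d (X i) (Y i) :=
    Fintype.sum_comp_le_sum (Fin.castLEEmb hmn) fun _ ↦ hd_nonneg _ _
  calc (∏ i : Fin m, EMprob d α (X (Fin.castLE hmn i)) (S i))
      ≤ Real.exp (∑ i : Fin m, α * d (X (Fin.castLE hmn i)) (Y (Fin.castLE hmn i))) *
          ∏ i : Fin m, EMprob d α (Y (Fin.castLE hmn i)) (S i) :=
        prod_le_exp_sum_mul_prod _ (fun _ _ ↦ EMprob_nonneg _ _ _ _)
          fun _ _ ↦ EMprob_le_exp_mul_EMprob d hα.le hd_symm hd_tri _ _ _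
    _ ≤ Real.exp (α * ∑ i : Fin n, d (X i) (Y i)) *
          ∏ i : Fin m, EMprob d α (Y (Fin.castLE hmn i)) (S i) := by
        gcongr
        · exact prod_nonneg fun _ _ ↦ EMprob_nonneg _ _ _ _
        · rw [← mul_sum]
          exact mul_le_mul_of_nonneg_left hprefix hα.le

/-- Coordinatewise products of Exponential Mechanism probabilities over a
prefix of length `m ≤ n` satisfy the CLDP bound with the sequence distance. -/
theorem em_product_bound {U : Type*} [Fintype U] [Nonempty U]
    (d : U → U → ℝ) (α : ℝ) (hα : 0 < α)
    (hd_nonneg : ∀ x y, 0 ≤ d x y)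
    (hd_symm : ∀ x y, d x y = d y x)
    (hd_tri : ∀ x y z, d x z ≤ d x y + d y z)
    (hd_eq : ∀ x y, d x y = 0 ↔ x = y)
    (n m : ℕ) (hmn : m ≤ n)
    (X Y : Fin n → U) (S : Fin m → U) :
    (∏ i : Fin m, EMprob d α (X (Fin.castLE hmn i)) (S i))
      ≤ Real.exp (α * ∑ i : Fin n, d (X i) (Y i)) *
        ∏ i : Fin m, EMprob d α (Y (Fin.castLE hmn i)) (S i) :=
  em_product_bound_general d α hα hd_nonneg hd_symm hd_tri n m hmn X Y S
end
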